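/- arXiv:1911.01300 — 3 statements merged into one kernel-verified Lean document; each statement's English description precedes it below -/
import Mathlib

section
/- Let G = (V,E) be a finite graph, X a Polish space, and μ ∈ P(X^V) absolutely continuous with respect to a product measure μ* = ∏_{v∈V} θ_v. If the density dμ/dμ* factorizes as a product over the 2-cliques of G, i.e., dμ/dμ*(x) = ∏_{K ∈ cl₂(G)} f_K(x_K) for nonnegative measurable f_K, then μ is a second-order Markov random field with respect to G. -/
open MeasureTheory ProbabilityTheory

section GraphDefs

variable {V : Type*}

/-- The (first) outer boundary of a set of vertices. -/
def graphBdry (G : SimpleGraph V) (A : Set V) : Set V :=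
  {u | u ∉ A ∧ ∃ v ∈ A, G.Adj u v}

/-- The second (double) boundary of a set of vertices. -/
def graphBdry2 (G : SimpleGraph V) (A : Set V) : Set V :=
  graphBdry G A ∪ graphBdry G (A ∪ graphBdry G A)

/-- The square graph: vertices at graph distance 1 or 2 are joined. -/
def sqGraph (G : SimpleGraph V) : SimpleGraph V where
  Adj u v := u ≠ v ∧ G.Reachable u v ∧ G.dist u v ≤ 2
  symm := by
    constructor
    rintro u v ⟨h1, h2, h3⟩
    exact ⟨h1.symm, h2.symm, by rwa [SimpleGraph.dist_comm]⟩
  loopless := by constructor; rintro u ⟨h, -⟩; exact h rfl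

/-- A 2-clique: a set of vertices of diameter at most 2. -/
def TwoClique (G : SimpleGraph V) (K : Set V) : Prop :=
  ∀ u ∈ K, ∀ v ∈ K, u ≠ v → G.Reachable u v ∧ G.dist u v ≤ 2

open scoped Classical in
/-- The finite collection of 2-cliques of a graph on a finite vertex set. -/
noncomputable def cl2Finset (G : SimpleGraph V) [Fintype V] : Finset (Finset V) :=
  Finset.univ.filter fun K => TwoClique G (K : Set V)

end GraphDefs

section MRFDefs

variable {V Ω X : Type*} [MeasurableSpace Ω] [StandardBorelSpace Ω] [Nonempty Ω]
  [MeasurableSpace X]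

/-- `Y_A` and `Y_B` are conditionally independent given `Y_S`. -/
def CondIndepCoords (Y : V → Ω → X) (hY : ∀ v, Measurable (Y v)) (μ : Measure Ω)
    [IsFiniteMeasure μ] (A B S : Set V) : Prop :=
  CondIndepFun
    (MeasurableSpace.comap (fun ω => (fun v : S => Y v ω)) MeasurableSpace.pi)
    ((measurable_pi_iff.mpr fun v : S => hY v).comap_le)
    (fun ω => (fun v : A => Y v ω)) (fun ω => (fun v : B => Y v ω)) μ

/-- First-order Markov random field property on a vertex subset `W`. -/
def IsMRF1On (G : SimpleGraph V) (Y : V → Ω → X) (hY : ∀ v, Measurable (Y v))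
    (μ : Measure Ω) [IsFiniteMeasure μ] (W : Set V) : Prop :=
  ∀ A : Set V, A.Finite → A ⊆ W →
    CondIndepCoords Y hY μ A (W \ (A ∪ graphBdry G A)) (graphBdry G A)

/-- Second-order Markov random field property on a vertex subset `W`. -/
def IsMRF2On (G : SimpleGraph V) (Y : V → Ω → X) (hY : ∀ v, Measurable (Y v))
    (μ : Measure Ω) [IsFiniteMeasure μ] (W : Set V) : Prop :=
  ∀ A : Set V, A.Finite → A ⊆ W →
    CondIndepCoords Y hY μ A (W \ (A ∪ graphBdry2 G A)) (graphBdry2 G A)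

end MRFDefs

open scoped ENNReal

/-!
Fix a finite `A`, let `S = ∂²A` and let `B` be the remaining vertices. A 2-clique meeting `A` has
diameter at most 2, so it lies in `A ∪ S`; hence the density splits as `g(x_A, x_S) · h(x_S, x_B)`.
Integrating out coordinates of the product measure, `P(x_A ∈ s, x_B ∈ t | x_S)` equals
`φ_s(x_S) · ψ_t(x_S)` with `φ_s = ∫ 1_s g dθ_A / ∫ g dθ_A` and `ψ_t = ∫ 1_t h dθ_B / ∫ h dθ_B`.
A conditional law of this product form is conditionally independent: taking `t` (resp. `s`) to be
everything recovers the two marginal conditional laws, up to the factor `φ_univ · ψ_univ = 1`.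
-/

theorem ENNReal.div_mul_div_mul_mul_of_le {a b c d : ℝ≥0∞} (hac : a ≤ c) (hbd : b ≤ d)
    (hcd : c * d ≠ ⊤) : a / c * (b / d) * (c * d) = a * b := by
  obtain rfl | hc := eq_or_ne c 0
  · simp [nonpos_iff_eq_zero.mp hac]
  obtain rfl | hd := eq_or_ne d 0
  · simp [nonpos_iff_eq_zero.mp hbd]
  have hc' : c ≠ ⊤ := fun h => hcd (ENNReal.mul_eq_top.mpr (Or.inr ⟨h, hd⟩))
  have hd' : d ≠ ⊤ := fun h => hcd (ENNReal.mul_eq_top.mpr (Or.inl ⟨hc, h⟩))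
  calc a / c * (b / d) * (c * d) = a / c * c * (b / d * d) := by ring
    _ = a * b := by rw [ENNReal.div_mul_cancel hc hc', ENNReal.div_mul_cancel hd hd']

section DependsOn

variable {ι : Type*} {α : ι → Type*} {s : Set ι}

theorem DependsOn.mul {M : Type*} [Mul M] {f g : (Π i, α i) → M} (hf : DependsOn f s)
    (hg : DependsOn g s) : DependsOn (f * g) s :=
  fun _ _ h => congrArg₂ (· * ·) (hf h) (hg h)

theorem DependsOn.div {M : Type*} [Div M] {f g : (Π i, α i) → M} (hf : DependsOn f s)
    (hg : DependsOn g s) : DependsOn (f / g) s :=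
  fun _ _ h => congrArg₂ (· / ·) (hf h) (hg h)

theorem dependsOn_finsetProd {κ M : Type*} [CommMonoid M] {t : Finset κ}
    {f : κ → (Π i, α i) → M} (hf : ∀ k ∈ t, DependsOn (f k) s) :
    DependsOn (fun x => ∏ k ∈ t, f k x) s :=
  fun _ _ h => Finset.prod_congr rfl fun k hk => hf k hk h

theorem DependsOn.indicator_one {M : Type*} [One M] [Zero M] {D : Set (Π i, α i)}
    (hD : DependsOn (· ∈ D) s) : DependsOn (D.indicator (1 : (Π i, α i) → M)) s := by
  intro x y h
  have hxy : x ∈ D ↔ y ∈ D := Iff.of_eq (hD h)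
  classical
  simp only [Set.indicator_apply, hxy, Pi.one_apply]

theorem Set.dependsOn_mem_preimage_domRestrict (t : Set ι) (u : Set (Π i : t, α i)) :
    DependsOn (· ∈ t.domRestrict ⁻¹' u) t :=
  fun _ _ h => congrArg (· ∈ u) (Set.dependsOn_domRestrict t h)

end DependsOn

section Marginal

open Function

variable {ι : Type*} [DecidableEq ι] {X : ι → Type*} [∀ i, MeasurableSpace (X i)]
  {μ : ∀ i, Measure (X i)}

theorem DependsOn.lmarginal {f : (Π i, X i) → ℝ≥0∞} {T : Set ι} (hf : DependsOn f T)
    (s : Finset ι) : DependsOn (∫⋯∫⁻_s, f ∂μ) (T \ s) :=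
  fun _ _ h => lintegral_congr fun z => hf.updateFinset z h

theorem lmarginal_mul_of_dependsOn {s : Finset ι} {F G : (Π i, X i) → ℝ≥0∞}
    (hF : DependsOn F (↑s)ᶜ) (hG : Measurable G) :
    ∫⋯∫⁻_s, (fun x => F x * G x) ∂μ = fun x => F x * (∫⋯∫⁻_s, G ∂μ) x := by
  ext x
  refine (lintegral_congr fun z => congrArg (· * _) (hF fun i hi => ?_)).trans
    (lintegral_const_mul _ (hG.comp measurable_updateFinset))
  simp only [updateFinset, dif_neg (show i ∉ s from hi)]

theorem lmarginal_congr_of_lt_top {s : Finset ι} {x₀ : Π i, X i} {F F₁ F₂ : (Π i, X i) → ℝ≥0∞}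
    (hF : Measurable F) (hfin : (∫⋯∫⁻_s, F ∂μ) x₀ ≠ ⊤) (h : ∀ x, F x < ⊤ → F₁ x = F₂ x) :
    (∫⋯∫⁻_s, F₁ ∂μ) x₀ = (∫⋯∫⁻_s, F₂ ∂μ) x₀ :=
  lintegral_congr_ae <| (ae_lt_top (hF.comp measurable_updateFinset) hfin).mono fun _ hz => h _ hz

theorem measurable_comap_domRestrict_of_dependsOn {β : Type*} [MeasurableSpace β]
    {s : Finset ι} {f : (Π i, X i) → β} (hf : Measurable f) (hdep : DependsOn f s)
    (x₀ : Π i, X i) :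
    Measurable[MeasurableSpace.comap (Set.domRestrict (s : Set ι)) MeasurableSpace.pi] f := by
  have hfac : f = (f ∘ updateFinset x₀ s) ∘ Set.domRestrict (s : Set ι) :=
    funext fun x => hdep fun i hi => by
      simp [updateFinset, Finset.mem_coe.mp hi, Set.domRestrict]
  rw [hfac]
  exact (hf.comp measurable_updateFinset).comp (comap_measurable _)

theorem lintegral_mul_mul_eq_lmarginal [Fintype ι] [∀ i, SigmaFinite (μ i)] {A S : Finset ι}
    (hAS : Disjoint A S) {P a b : (Π i, X i) → ℝ≥0∞} (hP : Measurable P) (ha : Measurable a)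
    (hb : Measurable b) (hPdep : DependsOn P S) (hadep : DependsOn a (↑A ∪ ↑S))
    (hbdep : DependsOn b (↑A)ᶜ) (x₀ : Π i, X i) :
    ∫⁻ x, P x * a x * b x ∂Measure.pi μ =
      (∫⋯∫⁻_S, (fun x => P x * (∫⋯∫⁻_A, a ∂μ) x * (∫⋯∫⁻_(A ∪ S)ᶜ, b ∂μ) x) ∂μ) x₀ := by
  set B := (A ∪ S)ᶜ
  have hSA : (S : Set ι) ⊆ (↑A)ᶜ :=
    Set.subset_compl_comm.mp (Finset.disjoint_coe.mpr hAS).subset_compl_right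
  have hPa : DependsOn (fun x => P x * a x) (↑B)ᶜ := by
    rw [Finset.coe_compl, compl_compl, Finset.coe_union]
    exact (hPdep.mono Set.subset_union_right).mul hadep
  have hPb : DependsOn (fun x => P x * (∫⋯∫⁻_B, b ∂μ) x) (↑A)ᶜ :=
    (hPdep.mono hSA).mul ((hbdep.lmarginal B).mono Set.sdiff_subset)
  have huniv : S ∪ (A ∪ B) = Finset.univ := by
    ext i; by_cases i ∈ A <;> by_cases i ∈ S <;> simp_all [B]
  have hAB : Disjoint A B := disjoint_compl_right.mono_left Finset.subset_union_left
  have hSAB : Disjoint S (A ∪ B) := Finset.disjoint_union_right.mpr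
    ⟨hAS.symm, disjoint_compl_right.mono_left Finset.subset_union_right⟩
  calc ∫⁻ x, P x * a x * b x ∂Measure.pi μ
      = (∫⋯∫⁻_S, ∫⋯∫⁻_A, ∫⋯∫⁻_B, (fun x => P x * a x * b x) ∂μ ∂μ ∂μ) x₀ := by
        rw [lintegral_eq_lmarginal_univ x₀, ← huniv, lmarginal_union _ _ (by fun_prop) hSAB,
          lmarginal_union _ _ (by fun_prop) hAB]
    _ = (∫⋯∫⁻_S, ∫⋯∫⁻_A, (fun x => P x * (∫⋯∫⁻_B, b ∂μ) x * a x) ∂μ ∂μ) x₀ := by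
        rw [lmarginal_mul_of_dependsOn hPa hb]
        congr! 3 with x
        ring
    _ = _ := by
        rw [lmarginal_mul_of_dependsOn hPb ha]
        congr! 2 with x
        ring

end Marginal

section CondExp

variable {Ω : Type*} {m m0 : MeasurableSpace Ω} {μ : Measure Ω} [IsFiniteMeasure μ]

theorem condExp_indicator_ae_eq_toReal (hm : m ≤ m0) {D : Set Ω} (hD : MeasurableSet D)
    {Φ : Ω → ℝ≥0∞} (hΦm : Measurable[m] Φ)
    (hΦ : ∀ E, MeasurableSet[m] E → ∫⁻ x in E, Φ x ∂μ = μ (E ∩ D)) :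
    μ⟦D | m⟧ =ᵐ[μ] fun x => (Φ x).toReal := by
  have hΦm0 : Measurable Φ := hΦm.mono hm le_rfl
  have hfin : ∫⁻ x, Φ x ∂μ ≠ ⊤ := by
    rw [← setLIntegral_univ, hΦ _ MeasurableSet.univ]
    exact measure_ne_top _ _
  have hint := integrable_toReal_of_lintegral_ne_top hΦm0.aemeasurable hfin
  refine (ae_eq_condExp_of_forall_setIntegral_eq hm ((integrable_const (1 : ℝ)).indicator hD)
    (fun _ _ _ => hint.integrableOn) (fun E hE _ => ?_)
    hΦm.ennreal_toReal.aestronglyMeasurable).symm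
  rw [integral_toReal hΦm0.aemeasurable (ae_restrict_of_ae (ae_lt_top hΦm0 hfin)), hΦ E hE,
    setIntegral_indicator hD, setIntegral_const, smul_eq_mul, mul_one, measureReal_def]

theorem condIndepFun_of_condExp_inter_ae_eq_mul [StandardBorelSpace Ω] (hm : m ≤ m0)
    {β β' : Type*} [MeasurableSpace β] [MeasurableSpace β'] {f : Ω → β} {g : Ω → β'}
    (hf : Measurable f) (hg : Measurable g) (φ : Set β → Ω → ℝ) (ψ : Set β' → Ω → ℝ)
    (h : ∀ s t, MeasurableSet s → MeasurableSet t →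
      μ⟦f ⁻¹' s ∩ g ⁻¹' t | m⟧ =ᵐ[μ] φ s * ψ t) :
    CondIndepFun m hm f g μ := by
  rw [condIndepFun_iff_condExp_inter_preimage_eq_mul hf hg]
  intro s t hs ht
  have hone : φ Set.univ * ψ Set.univ =ᵐ[μ] 1 := by
    refine (h _ _ MeasurableSet.univ MeasurableSet.univ).symm.trans ?_
    simp only [Set.preimage_univ, Set.inter_univ, Set.indicator_univ, condExp_const hm]
    rfl
  have hfs := h s Set.univ hs MeasurableSet.univ
  have hgt := h Set.univ t MeasurableSet.univ ht
  simp only [Set.preimage_univ, Set.inter_univ, Set.univ_inter] at hfs hgt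
  filter_upwards [h s t hs ht, hfs, hgt, hone] with x hst hs' ht' h1
  simp only [Pi.mul_apply, Pi.one_apply] at hst hs' ht' h1 ⊢
  rw [hst, hs', ht']
  linear_combination -(φ s x * ψ t x) * h1

end CondExp

section MarginalCondProb

variable {ι : Type*} [DecidableEq ι] {X : ι → Type*} [∀ i, MeasurableSpace (X i)]
  {μ : ∀ i, Measure (X i)}

-- The conditional probability of `D` given the coordinates outside `s`, under the density `f`.
-- Division in `ℝ≥0∞` makes it junk where `∫⋯∫⁻_s, f ∂μ` is `0` or `⊤`.
noncomputable def marginalCondProb (μ : ∀ i, Measure (X i)) (s : Finset ι)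
    (f : (Π i, X i) → ℝ≥0∞) (D : Set (Π i, X i)) : (Π i, X i) → ℝ≥0∞ :=
  (∫⋯∫⁻_s, D.indicator 1 * f ∂μ) / ∫⋯∫⁻_s, f ∂μ

theorem Measurable.marginalCondProb [∀ i, SigmaFinite (μ i)] {s : Finset ι}
    {f : (Π i, X i) → ℝ≥0∞} {D : Set (Π i, X i)} (hf : Measurable f) (hD : MeasurableSet D) :
    Measurable (marginalCondProb μ s f D) :=
  (((measurable_one.indicator hD).mul hf).lmarginal μ).div (hf.lmarginal μ)

theorem DependsOn.marginalCondProb {s : Finset ι} {T : Set ι} {f : (Π i, X i) → ℝ≥0∞}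
    {D : Set (Π i, X i)} (hf : DependsOn f T) (hD : DependsOn (· ∈ D) T) :
    DependsOn (marginalCondProb μ s f D) (T \ s) :=
  ((hD.indicator_one.mul hf).lmarginal s).div (hf.lmarginal s)

theorem lmarginal_indicator_one_mul_le (s : Finset ι) (f : (Π i, X i) → ℝ≥0∞)
    (D : Set (Π i, X i)) : ∫⋯∫⁻_s, D.indicator 1 * f ∂μ ≤ ∫⋯∫⁻_s, f ∂μ := by
  refine lmarginal_mono fun x => ?_
  by_cases hx : x ∈ D <;> simp [hx]

theorem marginalCondProb_mul_marginalCondProb_mul {s t : Finset ι} {f f' : (Π i, X i) → ℝ≥0∞}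
    {D D' : Set (Π i, X i)} {x : Π i, X i}
    (hfin : (∫⋯∫⁻_s, f ∂μ) x * (∫⋯∫⁻_t, f' ∂μ) x ≠ ⊤) :
    marginalCondProb μ s f D x * marginalCondProb μ t f' D' x *
        ((∫⋯∫⁻_s, f ∂μ) x * (∫⋯∫⁻_t, f' ∂μ) x) =
      (∫⋯∫⁻_s, D.indicator 1 * f ∂μ) x * (∫⋯∫⁻_t, D'.indicator 1 * f' ∂μ) x :=
  ENNReal.div_mul_div_mul_mul_of_le (lmarginal_indicator_one_mul_le s f D x)
    (lmarginal_indicator_one_mul_le t f' D' x) hfin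

end MarginalCondProb

section Factorization

variable {V X : Type*} [Fintype V] [DecidableEq V] [MeasurableSpace X] {θ : V → Measure X}
  {A S : Finset V} {g h : (V → X) → ℝ≥0∞}

theorem dependsOn_marginalCondProb_mul (hgdep : DependsOn g (↑A ∪ ↑S))
    (hhdep : DependsOn h (↑A)ᶜ) {DA DB : Set (V → X)} (hDAdep : DependsOn (· ∈ DA) A)
    (hDBdep : DependsOn (· ∈ DB) ↑(A ∪ S)ᶜ) :
    DependsOn (marginalCondProb θ A g DA * marginalCondProb θ (A ∪ S)ᶜ h DB) S := by
  refine ((hgdep.marginalCondProb (hDAdep.mono Set.subset_union_left)).mono ?_).mul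
    ((hhdep.marginalCondProb (hDBdep.mono ?_)).mono ?_)
  · exact fun v hv => hv.1.resolve_left hv.2
  · intro v hv hvA
    simp_all
  · intro v hv
    simp_all

variable [∀ v, SigmaFinite (θ v)]

theorem lintegral_withDensity_mul_eq_lmarginal (hAS : Disjoint A S) (hg : Measurable g)
    (hh : Measurable h) (hgdep : DependsOn g (↑A ∪ ↑S)) (hhdep : DependsOn h (↑A)ᶜ)
    {P qA qB : (V → X) → ℝ≥0∞} (hP : Measurable P) (hqA : Measurable qA) (hqB : Measurable qB)
    (hPdep : DependsOn P S) (hqAdep : DependsOn qA A) (hqBdep : DependsOn qB ↑(A ∪ S)ᶜ)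
    (x₀ : V → X) :
    ∫⁻ x, P x * qA x * qB x ∂(Measure.pi θ).withDensity (g * h) =
      (∫⋯∫⁻_S, (fun x => P x * (∫⋯∫⁻_A, qA * g ∂θ) x * (∫⋯∫⁻_(A ∪ S)ᶜ, qB * h ∂θ) x) ∂θ)
        x₀ := by
  have hBA : (↑(A ∪ S)ᶜ : Set V) ⊆ (↑A)ᶜ := by
    rw [Finset.coe_compl]
    exact Set.compl_subset_compl.mpr (Finset.coe_subset.mpr Finset.subset_union_left)
  refine (lintegral_withDensity_eq_lintegral_mul _ (hg.mul hh) ((hP.mul hqA).mul hqB)).trans <|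
    (lintegral_congr fun x => ?_).trans <| lintegral_mul_mul_eq_lmarginal hAS hP (hqA.mul hg)
      (hqB.mul hh) hPdep ((hqAdep.mono Set.subset_union_left).mul hgdep)
      ((hqBdep.mono hBA).mul hhdep) x₀
  simp only [Pi.mul_apply]
  ring

theorem lmarginal_mul_lmarginal_ne_top (hAS : Disjoint A S) (hg : Measurable g)
    (hh : Measurable h) (hgdep : DependsOn g (↑A ∪ ↑S)) (hhdep : DependsOn h (↑A)ᶜ)
    [IsFiniteMeasure ((Measure.pi θ).withDensity (g * h))] (x₀ : V → X) :
    (∫⋯∫⁻_S, (fun x => (∫⋯∫⁻_A, g ∂θ) x * (∫⋯∫⁻_(A ∪ S)ᶜ, h ∂θ) x) ∂θ) x₀ ≠ ⊤ := by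
  have hone : DependsOn (1 : (V → X) → ℝ≥0∞) ∅ := dependsOn_const 1
  have htotal := lintegral_withDensity_mul_eq_lmarginal (θ := θ) hAS hg hh hgdep hhdep
    measurable_one measurable_one measurable_one (hone.mono (Set.empty_subset _))
    (hone.mono (Set.empty_subset _)) (hone.mono (Set.empty_subset _)) x₀
  simp only [Pi.one_apply, one_mul] at htotal
  rw [← htotal, lintegral_one]
  exact measure_ne_top _ _

theorem setLIntegral_marginalCondProb_mul [Nonempty X] (hAS : Disjoint A S) (hg : Measurable g)
    (hh : Measurable h) (hgdep : DependsOn g (↑A ∪ ↑S)) (hhdep : DependsOn h (↑A)ᶜ)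
    [IsFiniteMeasure ((Measure.pi θ).withDensity (g * h))] {DA DB E : Set (V → X)}
    (hDA : MeasurableSet DA) (hDB : MeasurableSet DB) (hE : MeasurableSet E)
    (hDAdep : DependsOn (· ∈ DA) A) (hDBdep : DependsOn (· ∈ DB) ↑(A ∪ S)ᶜ)
    (hEdep : DependsOn (· ∈ E) S) :
    ∫⁻ x in E, marginalCondProb θ A g DA x * marginalCondProb θ (A ∪ S)ᶜ h DB x
        ∂(Measure.pi θ).withDensity (g * h) =
      (Measure.pi θ).withDensity (g * h) (E ∩ (DA ∩ DB)) := by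
  have x₀ : V → X := Classical.arbitrary _
  have hone : DependsOn (1 : (V → X) → ℝ≥0∞) ∅ := dependsOn_const 1
  have hc := (hg.marginalCondProb (s := A) (μ := θ) hDA).mul
    (hh.marginalCondProb (s := (A ∪ S)ᶜ) (μ := θ) hDB)
  calc ∫⁻ x in E, marginalCondProb θ A g DA x * marginalCondProb θ (A ∪ S)ᶜ h DB x ∂_
      = ∫⁻ x, (E.indicator (1 : (V → X) → ℝ≥0∞) *
          (marginalCondProb θ A g DA * marginalCondProb θ (A ∪ S)ᶜ h DB)) x *
            (1 : (V → X) → ℝ≥0∞) x * (1 : (V → X) → ℝ≥0∞) x ∂_ := by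
        rw [← lintegral_indicator hE]
        refine lintegral_congr fun x => ?_
        by_cases hx : x ∈ E <;> simp [hx]
    _ = (∫⋯∫⁻_S, (fun x => E.indicator 1 x *
          (marginalCondProb θ A g DA x * marginalCondProb θ (A ∪ S)ᶜ h DB x) *
            ((∫⋯∫⁻_A, g ∂θ) x * (∫⋯∫⁻_(A ∪ S)ᶜ, h ∂θ) x)) ∂θ) x₀ := by
        rw [lintegral_withDensity_mul_eq_lmarginal hAS hg hh hgdep hhdep
          ((measurable_one.indicator hE).mul hc) measurable_one measurable_one
          (hEdep.indicator_one.mul (dependsOn_marginalCondProb_mul hgdep hhdep hDAdep hDBdep))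
          (hone.mono (Set.empty_subset _)) (hone.mono (Set.empty_subset _)) x₀]
        simp only [one_mul, Pi.mul_apply, mul_assoc]
    _ = (∫⋯∫⁻_S, (fun x => E.indicator 1 x * (∫⋯∫⁻_A, DA.indicator 1 * g ∂θ) x *
          (∫⋯∫⁻_(A ∪ S)ᶜ, DB.indicator 1 * h ∂θ) x) ∂θ) x₀ := by
        refine lmarginal_congr_of_lt_top ((hg.lmarginal θ).mul (hh.lmarginal θ))
          (lmarginal_mul_lmarginal_ne_top hAS hg hh hgdep hhdep x₀) fun x hx => ?_
        rw [mul_assoc, marginalCondProb_mul_marginalCondProb_mul hx.ne, mul_assoc]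
    _ = ∫⁻ x, E.indicator 1 x * DA.indicator 1 x * DB.indicator 1 x ∂_ :=
        (lintegral_withDensity_mul_eq_lmarginal hAS hg hh hgdep hhdep
          (measurable_one.indicator hE) (measurable_one.indicator hDA)
          (measurable_one.indicator hDB) hEdep.indicator_one hDAdep.indicator_one
          hDBdep.indicator_one x₀).symm
    _ = _ := by
        rw [← lintegral_indicator_one (hE.inter (hDA.inter hDB)), Set.inter_indicator_one,
          Set.inter_indicator_one]
        simp only [Pi.mul_apply, mul_assoc]

theorem condExp_inter_ae_eq_marginalCondProb_mul [Nonempty X] (hAS : Disjoint A S)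
    (hg : Measurable g) (hh : Measurable h) (hgdep : DependsOn g (↑A ∪ ↑S))
    (hhdep : DependsOn h (↑A)ᶜ) {μ : Measure (V → X)} [IsFiniteMeasure μ]
    (hμ : μ = (Measure.pi θ).withDensity (g * h)) {DA DB : Set (V → X)}
    (hDA : MeasurableSet DA) (hDB : MeasurableSet DB) (hDAdep : DependsOn (· ∈ DA) A)
    (hDBdep : DependsOn (· ∈ DB) ↑(A ∪ S)ᶜ) :
    μ⟦DA ∩ DB | MeasurableSpace.comap (Set.domRestrict (S : Set V)) MeasurableSpace.pi⟧
      =ᵐ[μ] fun x => (marginalCondProb θ A g DA x *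
        marginalCondProb θ (A ∪ S)ᶜ h DB x).toReal := by
  subst hμ
  refine condExp_indicator_ae_eq_toReal (Set.measurable_restrict _).comap_le (hDA.inter hDB)
    (measurable_comap_domRestrict_of_dependsOn
      ((hg.marginalCondProb hDA).mul (hh.marginalCondProb hDB))
      (dependsOn_marginalCondProb_mul hgdep hhdep hDAdep hDBdep) (Classical.arbitrary _)) ?_
  rintro _ ⟨u, hu, rfl⟩
  exact setLIntegral_marginalCondProb_mul hAS hg hh hgdep hhdep hDA hDB
    (Set.measurable_restrict _ hu) hDAdep hDBdep
    (Set.dependsOn_mem_preimage_domRestrict (α := fun _ => X) _ u)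

theorem condIndepCoords_of_density_mul [StandardBorelSpace X] [Nonempty X] (hAS : Disjoint A S)
    (hg : Measurable g) (hh : Measurable h) (hgdep : DependsOn g (↑A ∪ ↑S))
    (hhdep : DependsOn h (↑A)ᶜ) {μ : Measure (V → X)} [IsFiniteMeasure μ]
    (hμ : μ = (Measure.pi θ).withDensity (g * h)) :
    CondIndepCoords (fun v x => x v) (fun v => measurable_pi_apply v) μ A
      (Set.univ \ (↑A ∪ ↑S)) S := by
  have hB : Set.univ \ (↑A ∪ ↑S) ⊆ (↑(A ∪ S)ᶜ : Set V) := fun v hv => by simpa using hv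
  refine condIndepFun_of_condExp_inter_ae_eq_mul _ (Set.measurable_restrict _)
    (Set.measurable_restrict _)
    (fun s x => (marginalCondProb θ A g (Set.domRestrict (A : Set V) ⁻¹' s) x).toReal)
    (fun t x => (marginalCondProb θ (A ∪ S)ᶜ h
      (Set.domRestrict (Set.univ \ (↑A ∪ ↑S)) ⁻¹' t) x).toReal)
    fun s t hs ht => ?_
  refine (condExp_inter_ae_eq_marginalCondProb_mul hAS hg hh hgdep hhdep hμ
    (Set.measurable_restrict _ hs) (Set.measurable_restrict _ ht)
    (Set.dependsOn_mem_preimage_domRestrict (α := fun _ => X) _ s)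
    ((Set.dependsOn_mem_preimage_domRestrict (α := fun _ => X) _ t).mono hB)).trans
    (Filter.Eventually.of_forall fun x => ENNReal.toReal_mul)

end Factorization

section Graph

variable {V : Type*}

theorem disjoint_graphBdry2 (G : SimpleGraph V) (A : Set V) : Disjoint A (graphBdry2 G A) :=
  Set.disjoint_left.mpr fun _ hv hv' => hv'.elim (·.1 hv) (·.1 (Or.inl hv))

theorem mem_union_graphBdry_of_adj {G : SimpleGraph V} {A : Set V} {v w : V} (hv : v ∈ A)
    (hvw : G.Adj v w) : w ∈ A ∪ graphBdry G A := by
  by_cases hw : w ∈ A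
  · exact Or.inl hw
  · exact Or.inr ⟨hw, v, hv, hvw.symm⟩

theorem TwoClique.subset_union_graphBdry2 {G : SimpleGraph V} {A K : Set V}
    (hK : TwoClique G K) {u : V} (huK : u ∈ K) (huA : u ∈ A) : K ⊆ A ∪ graphBdry2 G A := by
  intro w hw
  obtain rfl | hne := eq_or_ne u w
  · exact Or.inl huA
  obtain ⟨hreach, hdist⟩ := hK u huK w hw hne
  obtain ⟨p, hp⟩ := hreach.exists_walk_length_eq_dist
  rw [graphBdry2, ← Set.union_assoc]
  match p, hp with
  | .cons h₁ .nil, _ => exact Or.inl (mem_union_graphBdry_of_adj huA h₁)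
  | .cons h₁ (.cons h₂ .nil), _ =>
    exact mem_union_graphBdry_of_adj (mem_union_graphBdry_of_adj huA h₁) h₂
  | .nil, _ => exact absurd rfl hne
  | .cons _ (.cons _ (.cons _ _)), hp =>
    simp only [SimpleGraph.Walk.length_cons] at hp
    omega

end Graph

/-- Second-order Hammersley–Clifford, factorization implies 2MRF: if the density of `μ`
with respect to the product measure `Measure.pi θ` factorizes over the 2-cliques of a finite
graph `G`, then `μ` is a second-order Markov random field with respect to `G`. -/
theorem isMRF2_of_twoClique_factorization {V X : Type*} [Fintype V]
    [MeasurableSpace X] [StandardBorelSpace X] [Nonempty X]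
    (G : SimpleGraph V) (θ : V → Measure X) [∀ v, IsProbabilityMeasure (θ v)]
    (f : Finset V → (V → X) → ℝ≥0∞)
    (hfmeas : ∀ K, Measurable (f K))
    (hfloc : ∀ K, ∀ x y : V → X, (∀ v ∈ K, x v = y v) → f K x = f K y)
    (μ : Measure (V → X)) [IsProbabilityMeasure μ]
    (hμ : μ = (Measure.pi θ).withDensity (fun x => ∏ K ∈ cl2Finset G, f K x)) :
    IsMRF2On G (fun v x => x v) (fun v => measurable_pi_apply v) μ Set.univ := by
  classical
  intro A hA _
  obtain ⟨A, rfl⟩ := hA.exists_finset_coe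
  obtain ⟨S, hS⟩ := (Set.toFinite (graphBdry2 G ↑A)).exists_finset_coe
  rw [← hS]
  let meetsA : Finset V → Prop := fun K => ∃ u ∈ K, u ∈ A
  refine condIndepCoords_of_density_mul (θ := θ)
    (g := fun x => ∏ K ∈ (cl2Finset G).filter meetsA, f K x)
    (h := fun x => ∏ K ∈ (cl2Finset G).filter (¬ meetsA ·), f K x)
    (by simpa [← hS] using disjoint_graphBdry2 G ↑A)
    (Finset.measurable_prod _ fun K _ => hfmeas K) (Finset.measurable_prod _ fun K _ => hfmeas K)
    (dependsOn_finsetProd fun K hK => ?_) (dependsOn_finsetProd fun K hK => ?_) ?_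
  · obtain ⟨hKcl, u, huK, huA⟩ := Finset.mem_filter.mp hK
    refine DependsOn.mono ?_ fun x y => hfloc K x y
    rw [hS]
    exact TwoClique.subset_union_graphBdry2 (by simpa [cl2Finset] using hKcl) huK huA
  · exact DependsOn.mono (fun v hv hvA => (Finset.mem_filter.mp hK).2 ⟨v, hv, hvA⟩)
      fun x y => hfloc K x y
  · rw [hμ]
    congr 1
    funext x
    exact (Finset.prod_filter_mul_prod_filter_not _ _ _).symm
end

section
/- Let G = (V,E,o) be a rooted locally finite graph and n ≥ 4. Set V_n = {v : d(v,o) ≤ n}, U_n = V_n \ V_{n-2}, and define G_n = (V_n, E_n) where E_n consists of the edges of G within V_n together with all pairs of distinct vertices of U_n. Then for every A ⊆ V_{n-3}, the second boundary of A in G equals the second boundary of A in G_n: ∂²_G A = ∂²_{G_n} A. Moreover, for any A' ⊆ V_{n-2}, ∂²_G A' ⊆ ∂²_{G_n} A'. -/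
open MeasureTheory ProbabilityTheory

variable {V : Type*}

/-- The ball of radius `n` around the root `o` in `G`. -/
def gball {V : Type*} (G : SimpleGraph V) (o : V) (n : ℕ) : Set V :=
  {v | G.Reachable o v ∧ G.dist o v ≤ n}

/-- The augmented ball graph `G_n`: the edges of `G` inside the ball `V_n` of radius `n`
about the root, together with all pairs of distinct vertices of the annulus
`U_n = V_n \ V_{n-2}`. -/
def augGraph {V : Type*} (G : SimpleGraph V) (o : V) (n : ℕ) : SimpleGraph V where
  Adj u v := (u ∈ gball G o n ∧ v ∈ gball G o n ∧ G.Adj u v) ∨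
    (u ∈ gball G o n \ gball G o (n - 2) ∧ v ∈ gball G o n \ gball G o (n - 2) ∧ u ≠ v)
  symm := by
    constructor
    rintro u v (⟨h1, h2, h3⟩ | ⟨h1, h2, h3⟩)
    · exact Or.inl ⟨h2, h1, h3.symm⟩
    · exact Or.inr ⟨h2, h1, h3.symm⟩
  loopless := by
    constructor
    rintro u (⟨-, -, h⟩ | ⟨-, -, h⟩)
    · exact G.loopless.irrefl u h
    · exact h rfl

/-!
The edges added in `G_n` join only vertices of the annulus `U_n`, while `G_n` keeps every edge
of `G` inside `V_n`. Hence the first boundary of a set inside `V_{n-2}` is the same in both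
graphs, and that of a set inside `V_{n-1}` can only grow in `G_n`. Since `A ∪ ∂A ⊆ V_{k+1}` for
`A ⊆ V_k`, applying this to `A` and to `A ∪ ∂A` gives both claims.
-/

lemma graphBdry2_subset_of_graphBdry {G H : SimpleGraph V} {A : Set V}
    (h₁ : graphBdry G A = graphBdry H A)
    (h₂ : graphBdry G (A ∪ graphBdry G A) ⊆ graphBdry H (A ∪ graphBdry G A)) :
    graphBdry2 G A ⊆ graphBdry2 H A := by
  unfold graphBdry2
  rw [← h₁]
  exact Set.union_subset_union_right _ h₂

lemma graphBdry2_eq_of_graphBdry {G H : SimpleGraph V} {A : Set V}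
    (h₁ : graphBdry G A = graphBdry H A)
    (h₂ : graphBdry G (A ∪ graphBdry G A) = graphBdry H (A ∪ graphBdry G A)) :
    graphBdry2 G A = graphBdry2 H A := by
  unfold graphBdry2
  rw [← h₁, h₂]

section gball

variable {G : SimpleGraph V} {o : V}

lemma gball_mono {m k : ℕ} (h : m ≤ k) : gball G o m ⊆ gball G o k :=
  fun _ ⟨hr, hd⟩ => ⟨hr, hd.trans h⟩

lemma mem_gball_succ_of_adj {u v : V} {m : ℕ} (hv : v ∈ gball G o m) (h : G.Adj v u) :
    u ∈ gball G o (m + 1) := by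
  obtain ⟨hr, hd⟩ := hv
  refine ⟨hr.trans h.reachable, ?_⟩
  have := h.reachable.dist_triangle_right o
  rw [SimpleGraph.dist_eq_one_iff_adj.mpr h] at this
  omega

lemma union_graphBdry_subset_gball_succ {m : ℕ} {A : Set V} (hA : A ⊆ gball G o m) :
    A ∪ graphBdry G A ⊆ gball G o (m + 1) := by
  rintro u (hu | ⟨-, v, hvA, huv⟩)
  · exact gball_mono m.le_succ (hA hu)
  · exact mem_gball_succ_of_adj (hA hvA) huv.symm

lemma graphBdry_subset_augGraph {n m : ℕ} (hmn : m + 1 ≤ n) {A : Set V}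
    (hA : A ⊆ gball G o m) : graphBdry G A ⊆ graphBdry (augGraph G o n) A := by
  rintro u ⟨huA, v, hvA, huv⟩
  have hv : v ∈ gball G o n := gball_mono (by omega) (hA hvA)
  have hu : u ∈ gball G o n := gball_mono hmn (mem_gball_succ_of_adj (hA hvA) huv.symm)
  exact ⟨huA, v, hvA, Or.inl ⟨hu, hv, huv⟩⟩

lemma graphBdry_augGraph_eq {n m : ℕ} (hmn : m + 2 ≤ n) {A : Set V}
    (hA : A ⊆ gball G o m) : graphBdry G A = graphBdry (augGraph G o n) A := by
  refine (graphBdry_subset_augGraph (by omega) hA).antisymm ?_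
  rintro u ⟨huA, v, hvA, ⟨-, -, huv⟩ | ⟨-, hv, -⟩⟩
  · exact ⟨huA, v, hvA, huv⟩
  · exact absurd (gball_mono (by omega) (hA hvA)) hv.2

end gball

theorem bdry2_augGraph_general (G : SimpleGraph V) (o : V) (n : ℕ) (hn : 4 ≤ n) :
    (∀ A : Set V, A ⊆ gball G o (n - 3) →
      graphBdry2 G A = graphBdry2 (augGraph G o n) A) ∧
    (∀ A' : Set V, A' ⊆ gball G o (n - 2) →
      graphBdry2 G A' ⊆ graphBdry2 (augGraph G o n) A') := by
  constructor
  · intro A hA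
    have hAB : A ∪ graphBdry G A ⊆ gball G o (n - 3 + 1) :=
      union_graphBdry_subset_gball_succ hA
    exact graphBdry2_eq_of_graphBdry (graphBdry_augGraph_eq (by omega) hA)
      (graphBdry_augGraph_eq (by omega) hAB)
  · intro A hA
    have hAB : A ∪ graphBdry G A ⊆ gball G o (n - 2 + 1) :=
      union_graphBdry_subset_gball_succ hA
    exact graphBdry2_subset_of_graphBdry (graphBdry_augGraph_eq (by omega) hA)
      (graphBdry_subset_augGraph (by omega) hAB)

/-- For `A ⊆ V_{n-3}`, the second boundary of `A` in `G` equals the second boundary of `A`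
in the augmented ball graph `G_n`; moreover for `A' ⊆ V_{n-2}`, `∂²_G A' ⊆ ∂²_{G_n} A'`. -/
theorem bdry2_augGraph (G : SimpleGraph V) [G.LocallyFinite] (o : V) (n : ℕ) (hn : 4 ≤ n) :
    (∀ A : Set V, A ⊆ gball G o (n - 3) →
      graphBdry2 G A = graphBdry2 (augGraph G o n) A) ∧
    (∀ A' : Set V, A' ⊆ gball G o (n - 2) →
      graphBdry2 G A' ⊆ graphBdry2 (augGraph G o n) A') :=
  bdry2_augGraph_general G o n hn
end

section
/- Let G = (V,E,o) be a rooted locally finite graph, n ≥ 4, V_n = {v : d(v,o) ≤ n}, U_n = V_n \ V_{n-2}, and G_n = (V_n, E_n) with E_n the edges of G inside V_n together with all pairs of distinct vertices of U_n. Then the graph distance in G_n satisfies d_{G_n}(u,v) ≤ d_G(u,v) for all u,v ∈ V_n; consequently, every 2-clique K of G with K ⊆ V_n is also a 2-clique of G_n. -/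
open MeasureTheory ProbabilityTheory

variable {V : Type*}

namespace SimpleGraph

variable {G : SimpleGraph V} {o : V} {n : ℕ}

lemma mem_gball_succ_of_adj {x y : V} (hx : x ∈ gball G o n) (h : G.Adj x y) :
    y ∈ gball G o (n + 1) := by
  refine ⟨hx.1.trans h.reachable, ?_⟩
  have := h.reachable.dist_triangle_right o
  rw [dist_eq_one_iff_adj.mpr h] at this
  exact this.trans (Nat.add_le_add_right hx.2 1)

lemma not_mem_gball_sub_two_of_adj (hn : 1 ≤ n) {x y : V} (hy : y ∉ gball G o n)
    (h : G.Adj x y) : x ∉ gball G o (n - 2) := fun hx =>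
  hy ⟨(mem_gball_succ_of_adj hx h).1, (mem_gball_succ_of_adj hx h).2.trans (by omega)⟩

/-- A walk starting outside `V_n` re-enters `V_n` through the annulus `U_n`, whose vertices are
pairwise adjacent in `G_n`; this is the invariant that makes the induction along the walk go
through. -/
lemma exists_augGraph_walk (hn : 1 ≤ n) {u v : V} (p : G.Walk u v) (hv : v ∈ gball G o n) :
    (u ∈ gball G o n → ∃ q : (augGraph G o n).Walk u v, q.length ≤ p.length) ∧
    (u ∉ gball G o n → ∃ x ∈ gball G o n \ gball G o (n - 2),
      ∃ q : (augGraph G o n).Walk x v, q.length < p.length) := by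
  induction p with
  | nil => exact ⟨fun _ => ⟨.nil, le_rfl⟩, fun hu => absurd hv hu⟩
  | @cons u w v h p ih =>
    obtain ⟨ih_in, ih_out⟩ := ih hv
    rw [Walk.length_cons]
    by_cases hw : w ∈ gball G o n
    · obtain ⟨q, hq⟩ := ih_in hw
      refine ⟨fun hu => ⟨.cons (show (augGraph G o n).Adj u w from Or.inl ⟨hu, hw, h⟩) q,
        by rw [Walk.length_cons]; omega⟩, fun hu => ?_⟩
      exact ⟨w, ⟨hw, not_mem_gball_sub_two_of_adj hn hu h.symm⟩, q, by omega⟩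
    · obtain ⟨x, hx, q, hq⟩ := ih_out hw
      refine ⟨fun hu => ?_, fun _ => ⟨x, hx, q, by omega⟩⟩
      by_cases hux : u = x
      · subst hux
        exact ⟨q, by omega⟩
      have hu_annulus : u ∈ gball G o n \ gball G o (n - 2) :=
        ⟨hu, not_mem_gball_sub_two_of_adj hn hw h⟩
      exact ⟨.cons (show (augGraph G o n).Adj u x from Or.inr ⟨hu_annulus, hx, hux⟩) q,
        by rw [Walk.length_cons]; omega⟩

lemma reachable_augGraph_and_dist_le (hn : 1 ≤ n) {u v : V} (hu : u ∈ gball G o n)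
    (hv : v ∈ gball G o n) :
    (augGraph G o n).Reachable u v ∧ (augGraph G o n).dist u v ≤ G.dist u v := by
  obtain ⟨p, hp⟩ := (hu.1.symm.trans hv.1).exists_walk_length_eq_dist
  obtain ⟨q, hq⟩ := (exists_augGraph_walk hn p hv).1 hu
  exact ⟨q.reachable, (dist_le q).trans (hp ▸ hq)⟩

end SimpleGraph

lemma TwoClique.of_dist_le {G H : SimpleGraph V} {K : Set V}
    (hGH : ∀ u ∈ K, ∀ v ∈ K, H.Reachable u v ∧ H.dist u v ≤ G.dist u v)
    (hK : TwoClique G K) : TwoClique H K := fun u hu v hv huv =>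
  ⟨(hGH u hu v hv).1, (hGH u hu v hv).2.trans (hK u hu v hv huv).2⟩

theorem dist_augGraph_le_general (G : SimpleGraph V) (o : V) (n : ℕ) (hn : 4 ≤ n) :
    (∀ u ∈ gball G o n, ∀ v ∈ gball G o n,
      (augGraph G o n).Reachable u v ∧ (augGraph G o n).dist u v ≤ G.dist u v) ∧
    (∀ K : Set V, K ⊆ gball G o n → TwoClique G K → TwoClique (augGraph G o n) K) := by
  have hdist := fun u (hu : u ∈ gball G o n) v (hv : v ∈ gball G o n) =>
    SimpleGraph.reachable_augGraph_and_dist_le (by omega) hu hv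
  exact ⟨hdist, fun K hKn => TwoClique.of_dist_le fun u hu v hv => hdist u (hKn hu) v (hKn hv)⟩

/-- The graph distance in the augmented ball graph `G_n` is at most the graph distance
in `G` on the ball `V_n`; consequently every 2-clique of `G` contained in `V_n` is also a
2-clique of `G_n`. -/
theorem dist_augGraph_le (G : SimpleGraph V) [G.LocallyFinite] (o : V) (n : ℕ) (hn : 4 ≤ n) :
    (∀ u ∈ gball G o n, ∀ v ∈ gball G o n,
      (augGraph G o n).Reachable u v ∧ (augGraph G o n).dist u v ≤ G.dist u v) ∧
    (∀ K : Set V, K ⊆ gball G o n → TwoClique G K → TwoClique (augGraph G o n) K) :=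
  dist_augGraph_le_general G o n hn
end
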